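/- arXiv:math/0502412 — 2 statements merged into one kernel-verified Lean document; each statement's English description precedes it below -/
import Mathlib

section
/- For each n ≥ 0, (n+1)!·Λ_n lies in ℤ[X_1, X_2, ..., X_{n+1}]. -/
open MvPolynomial PowerSeries

/-- The series `S = ∑_{j ≥ 1} (X_j / j) t^j` over `ℚ[X_1, X_2, ...]`. -/
noncomputable def heisS : PowerSeries (MvPolynomial ℕ ℚ) :=
  PowerSeries.mk fun j => if j = 0 then 0 else (j : ℚ)⁻¹ • MvPolynomial.X j

/-- `exp S = ∑_k S^k / k!`; since `S` has zero constant term, the `n`-th coefficient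
only involves `k ≤ n`. -/
noncomputable def heisExpS : PowerSeries (MvPolynomial ℕ ℚ) :=
  PowerSeries.mk fun n =>
    ∑ k ∈ Finset.range (n + 1), (k.factorial : ℚ)⁻¹ • PowerSeries.coeff n (heisS ^ k)

/-- `Λ_n`, defined by `∑_{n ≥ 0} Λ_n t^n = exp (∑_{j ≥ 1} (X_j / j) t^j)`. -/
noncomputable def Lam (n : ℕ) : MvPolynomial ℕ ℚ := PowerSeries.coeff n heisExpS

lemma coeff_heisS (j : ℕ) :
    PowerSeries.coeff j heisS = if j = 0 then 0 else (j : ℚ)⁻¹ • MvPolynomial.X j := by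
  simp [heisS]

lemma coeff_deriv_heisS (j : ℕ) :
    PowerSeries.coeff j (PowerSeries.derivative (MvPolynomial ℕ ℚ) heisS) = MvPolynomial.X (j + 1) := by
  rw [PowerSeries.coeff_derivative, coeff_heisS]
  simp only [Nat.succ_ne_zero, if_false]
  rw [MvPolynomial.smul_eq_C_mul,
    show ((j : MvPolynomial ℕ ℚ) + 1) = MvPolynomial.C ((j : ℚ) + 1) by simp,
    mul_assoc, mul_comm (MvPolynomial.X (j+1)), ← mul_assoc, ← MvPolynomial.C_mul]
  have h : ((j + 1 : ℕ) : ℚ)⁻¹ * ((j : ℚ) + 1) = 1 := by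
    rw [inv_mul_eq_one₀]; · push_cast; ring
    · exact Nat.cast_ne_zero.mpr (Nat.succ_ne_zero j)
  rw [h, MvPolynomial.C_1, one_mul]

lemma coeff_heisS_pow_eq_zero {k m : ℕ} (h : m < k) :
    PowerSeries.coeff m (heisS ^ k) = 0 := by
  induction k generalizing m with
  | zero => omega
  | succ k ih =>
    rw [pow_succ', PowerSeries.coeff_mul]
    apply Finset.sum_eq_zero
    rintro ⟨i, j⟩ hij
    rw [Finset.HasAntidiagonal.mem_antidiagonal] at hij
    rcases Nat.eq_zero_or_pos i with hi | hi
    · subst hi; rw [coeff_heisS]; simp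
    · have : j < k := by omega
      rw [ih this, mul_zero]

lemma Lam_eq_sum (n : ℕ) : Lam n =
    ∑ k ∈ Finset.range (n + 1), (k.factorial : ℚ)⁻¹ • PowerSeries.coeff n (heisS ^ k) := by
  simp [Lam, heisExpS]

lemma Lam_zero : Lam 0 = 1 := by
  rw [Lam_eq_sum]; simp

lemma sum_trunc {i n : ℕ} (h : i ≤ n) :
    ∑ m ∈ Finset.range (n + 1), (m.factorial : ℚ)⁻¹ • PowerSeries.coeff i (heisS ^ m)
      = Lam i := by
  rw [Lam_eq_sum]
  symm
  apply Finset.sum_subset (Finset.range_subset_range.mpr (by omega))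
  intro m _ hm
  rw [Finset.mem_range, not_lt] at hm
  rw [coeff_heisS_pow_eq_zero (by omega), smul_zero]

lemma heis_rec (n : ℕ) :
    ((n : ℚ) + 1) • Lam (n + 1) =
      ∑ p ∈ Finset.HasAntidiagonal.antidiagonal n, MvPolynomial.X (p.2 + 1) * Lam p.1 := by
  have key : ∀ m : ℕ, ((n : ℚ) + 1) • PowerSeries.coeff (n + 1) (heisS ^ (m + 1)) =
      (m + 1 : ℕ) • ∑ p ∈ Finset.HasAntidiagonal.antidiagonal n,
        PowerSeries.coeff p.1 (heisS ^ m) * MvPolynomial.X (p.2 + 1) := by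
    intro m
    have h1 := PowerSeries.coeff_derivative (heisS ^ (m + 1)) n
    rw [Derivation.leibniz_pow] at h1
    simp only [Nat.add_sub_cancel, smul_eq_mul, map_nsmul] at h1
    rw [PowerSeries.coeff_mul] at h1
    simp only [coeff_deriv_heisS] at h1
    rw [MvPolynomial.smul_eq_C_mul, mul_comm,
      show MvPolynomial.C ((n : ℚ) + 1) = ((n : MvPolynomial ℕ ℚ) + 1) by simp, h1]
  rw [Lam_eq_sum, Finset.smul_sum, Finset.sum_range_succ']
  have h0 : PowerSeries.coeff (n + 1) (heisS ^ 0) = 0 := by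
    simp [PowerSeries.coeff_one]
  rw [h0]
  simp only [smul_zero, add_zero]
  have step : ∀ m : ℕ, ((n : ℚ) + 1) • (((m + 1).factorial : ℚ)⁻¹ •
      PowerSeries.coeff (n + 1) (heisS ^ (m + 1))) =
      (m.factorial : ℚ)⁻¹ • ∑ p ∈ Finset.HasAntidiagonal.antidiagonal n,
        PowerSeries.coeff p.1 (heisS ^ m) * MvPolynomial.X (p.2 + 1) := by
    intro m
    rw [smul_comm, key, ← Nat.cast_smul_eq_nsmul ℚ, smul_smul]
    congr 1
    rw [Nat.factorial_succ]
    push_cast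
    have h1 : ((m : ℚ) + 1) ≠ 0 := by positivity
    have h2 : (m.factorial : ℚ) ≠ 0 := Nat.cast_ne_zero.mpr m.factorial_ne_zero
    field_simp
  simp only [step]
  simp only [Finset.smul_sum, ← smul_mul_assoc]
  rw [Finset.sum_comm]
  refine Finset.sum_congr rfl fun p hp => ?_
  rw [← Finset.sum_mul, sum_trunc (Finset.HasAntidiagonal.antidiagonal.fst_le hp), mul_comm]

lemma integrality_aux (n : ℕ) : ∃ Q : MvPolynomial ℕ ℤ,
    (Q.vars : Set ℕ) ⊆ (Finset.Icc 1 n : Finset ℕ) ∧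
      MvPolynomial.map (Int.castRingHom ℚ) Q = (n.factorial : ℚ) • Lam n := by
  induction n using Nat.strong_induction_on with
  | _ n ih =>
    match n with
    | 0 =>
      refine ⟨1, ?_, ?_⟩
      · simp
      · simp [Lam_zero]
    | (n+1) =>
      refine ⟨∑ p ∈ (Finset.HasAntidiagonal.antidiagonal n).attach,
        ((n.choose p.1.1 * p.1.2.factorial : ℕ) : ℤ) •
          (MvPolynomial.X (p.1.2 + 1) *
            (ih p.1.1 (Nat.lt_succ_of_le (Finset.HasAntidiagonal.antidiagonal.fst_le p.2))).choose), ?_, ?_⟩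
      · intro x hx
        simp only [Finset.coe_subset] at hx ⊢
        have := MvPolynomial.vars_sum_subset (t := (Finset.HasAntidiagonal.antidiagonal n).attach)
          (φ := fun p => ((n.choose p.1.1 * p.1.2.factorial : ℕ) : ℤ) •
          (MvPolynomial.X (p.1.2 + 1) *
            (ih p.1.1 (Nat.lt_succ_of_le (Finset.HasAntidiagonal.antidiagonal.fst_le p.2))).choose)) hx
        rw [Finset.mem_biUnion] at this
        obtain ⟨p, -, hp⟩ := this
        have hsp := (ih p.1.1 (Nat.lt_succ_of_le (Finset.HasAntidiagonal.antidiagonal.fst_le p.2))).choose_spec.1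
        beta_reduce at hp
        rw [zsmul_eq_mul] at hp
        have h1 := MvPolynomial.vars_mul ((n.choose p.1.1 * p.1.2.factorial : ℕ) : MvPolynomial ℕ ℤ)
          (MvPolynomial.X (p.1.2 + 1) *
            (ih p.1.1 (Nat.lt_succ_of_le (Finset.HasAntidiagonal.antidiagonal.fst_le p.2))).choose)
        have h2 := MvPolynomial.vars_mul (MvPolynomial.X (p.1.2 + 1) : MvPolynomial ℕ ℤ)
          (ih p.1.1 (Nat.lt_succ_of_le (Finset.HasAntidiagonal.antidiagonal.fst_le p.2))).choose
        have hx1 := h1 hp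
        rw [Finset.mem_union] at hx1
        rcases hx1 with hx1 | hx1
        · exfalso
          have : ((n.choose p.1.1 * p.1.2.factorial : ℕ) : MvPolynomial ℕ ℤ) =
              MvPolynomial.C ((n.choose p.1.1 * p.1.2.factorial : ℕ) : ℤ) := by
            simp
          rw [this, MvPolynomial.vars_C] at hx1
          exact Finset.notMem_empty x hx1
        · have hx2 := h2 hx1
          rw [Finset.mem_union] at hx2
          have hple : p.1.1 ≤ n := Finset.HasAntidiagonal.antidiagonal.fst_le p.2
          have hple2 : p.1.2 ≤ n := Finset.HasAntidiagonal.antidiagonal.snd_le p.2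
          rcases hx2 with hx2 | hx2
          · rw [MvPolynomial.vars_X] at hx2
            rw [Finset.mem_singleton] at hx2
            subst hx2
            simp only [Finset.mem_coe, Finset.mem_Icc]
            omega
          · have := hsp (Finset.mem_coe.mpr hx2)
            simp only [Finset.mem_coe, Finset.mem_Icc] at this ⊢
            omega
      · rw [map_sum]
        have key : ((n+1).factorial : ℚ) • Lam (n+1) = (n.factorial : ℚ) •
            ∑ p ∈ Finset.HasAntidiagonal.antidiagonal n, MvPolynomial.X (p.2 + 1) * Lam p.1 := by
          rw [← heis_rec, smul_smul, Nat.factorial_succ]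
          push_cast
          ring_nf
        rw [key, Finset.smul_sum, ← Finset.sum_attach (Finset.HasAntidiagonal.antidiagonal n)
          (fun p => (n.factorial : ℚ) • (MvPolynomial.X (p.2 + 1) * Lam p.1))]
        refine Finset.sum_congr rfl fun p _ => ?_
        rw [map_zsmul, map_mul, MvPolynomial.map_X,
          (ih p.1.1 (Nat.lt_succ_of_le (Finset.HasAntidiagonal.antidiagonal.fst_le p.2))).choose_spec.2]
        rw [← Int.cast_smul_eq_zsmul ℚ, mul_smul_comm, smul_smul]
        congr 1
        have hp : p.1.1 + p.1.2 = n := Finset.HasAntidiagonal.mem_antidiagonal.mp p.2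
        have := Nat.choose_mul_factorial_mul_factorial (Finset.HasAntidiagonal.antidiagonal.fst_le p.2 : p.1.1 ≤ n)
        push_cast
        rw [show n - p.1.1 = p.1.2 by omega] at this
        exact_mod_cast (by rw [← this]; ring : (n.choose p.1.1 * p.1.2.factorial * p.1.1.factorial : ℕ) = n.factorial)

theorem Lam_integrality (n : ℕ) :
    ∃ Q : MvPolynomial ℕ ℤ,
      (Q.vars : Set ℕ) ⊆ (Finset.Icc 1 (n + 1) : Finset ℕ) ∧
        MvPolynomial.map (Int.castRingHom ℚ) Q = ((n + 1).factorial : ℚ) • Lam n := by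
  obtain ⟨Q, h1, h2⟩ := integrality_aux n
  refine ⟨((n + 1 : ℕ) : ℤ) • Q, ?_, ?_⟩
  · intro x hx
    rw [zsmul_eq_mul] at hx
    have := MvPolynomial.vars_mul (((n+1:ℕ) : ℤ) : MvPolynomial ℕ ℤ) Q hx
    rw [Finset.mem_union] at this
    rcases this with h | h
    · exfalso
      rw [show ((((n+1:ℕ) : ℤ)) : MvPolynomial ℕ ℤ) = MvPolynomial.C (((n+1:ℕ)) : ℤ) by simp,
        MvPolynomial.vars_C] at h
      exact Finset.notMem_empty x h
    · have := h1 (Finset.mem_coe.mpr h)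
      simp only [Finset.mem_coe, Finset.mem_Icc] at this ⊢
      omega
  · rw [map_zsmul, h2, ← Int.cast_smul_eq_zsmul ℚ, smul_smul, Nat.factorial_succ]
    push_cast
    ring_nf
end

section
/- Let f(x,y) = y² + a₁xy + a₃y − x³ − a₂x² − a₄x − a₆ over a commutative ring R, let p = 2, and let P be the derivation with P(x) = 2y + a₁x + a₃ and P(y) = −(3x² + 2a₂x + a₄ − a₁y). Then for every h ∈ R[x,y], ∂²/∂x∂y (f·h) ≡ (P + a₁)(h) modulo the ideal generated by 2 and f. (This is the Stöhr–Voloch formula for the Cartier operator in characteristic 2.) -/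
/-!
Expanding by the Leibniz rule,
`∂ₓ∂ᵧ(f h) = f_{xy} h + (f_y ∂ₓ + f_x ∂ᵧ) h + f ∂ₓ∂ᵧ h`.
For the Weierstrass polynomial `P(x) = f_y`, `P(y) = f_x` and `f_{xy} = a₁`, so the difference
of the two sides is `f ∂ₓ∂ᵧ h`, which lies in the ideal generated by `f`.
-/

open MvPolynomial

/-- Base ring `R = ℤ[a₁,a₂,a₃,a₄,a₆]`. -/
noncomputable abbrev WRing : Type := MvPolynomial (Fin 5) ℤ

theorem Derivation.sum_apply {R A M ι : Type*} [CommSemiring R] [CommSemiring A]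
    [Algebra R A] [AddCommMonoid M] [Module A M] [Module R M] (s : Finset ι)
    (D : ι → Derivation R A M) (a : A) : (∑ i ∈ s, D i) a = ∑ i ∈ s, D i a := by
  rw [← Derivation.coeFnAddMonoidHom_apply, map_sum, Finset.sum_apply]
  rfl

namespace MvPolynomial

section CommSemiring

variable {R σ : Type*} [CommSemiring R]

theorem derivation_eq_sum_smul_pderiv [Fintype σ]
    (D : Derivation R (MvPolynomial σ R) (MvPolynomial σ R)) :
    D = ∑ i, D (X i) • pderiv i :=
  derivation_ext fun j => by
    classical simp [Derivation.sum_apply, pderiv_X, Pi.single_apply]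

theorem pderiv_pderiv_mul (i j : σ) (f h : MvPolynomial σ R) :
    pderiv i (pderiv j (f * h)) = pderiv i (pderiv j f) * h + pderiv j f * pderiv i h +
      pderiv i f * pderiv j h + f * pderiv i (pderiv j h) := by
  simp only [pderiv_mul, map_add]
  ring

end CommSemiring

variable {R : Type*} [CommRing R]

theorem pderiv_zero_pderiv_one_mul_sub {f : MvPolynomial (Fin 2) R} {c : R}
    {D : Derivation R (MvPolynomial (Fin 2) R) (MvPolynomial (Fin 2) R)}
    (hD₀ : D (X 0) = pderiv 1 f) (hD₁ : D (X 1) = pderiv 0 f)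
    (hc : pderiv 0 (pderiv 1 f) = C c) (h : MvPolynomial (Fin 2) R) :
    pderiv 0 (pderiv 1 (f * h)) - (D h + C c * h) = f * pderiv 0 (pderiv 1 h) := by
  rw [pderiv_pderiv_mul, derivation_eq_sum_smul_pderiv D, Derivation.sum_apply,
    Fin.sum_univ_two, Derivation.smul_apply, Derivation.smul_apply, hD₀, hD₁, hc, smul_eq_mul,
    smul_eq_mul]
  ring

noncomputable def weierstrassPoly (a₁ a₂ a₃ a₄ a₆ : R) : MvPolynomial (Fin 2) R :=
  X 1 ^ 2 + C a₁ * X 0 * X 1 + C a₃ * X 1 - X 0 ^ 3 - C a₂ * X 0 ^ 2 - C a₄ * X 0 - C a₆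

variable (a₁ a₂ a₃ a₄ a₆ : R)

theorem pderiv_one_weierstrassPoly :
    pderiv 1 (weierstrassPoly a₁ a₂ a₃ a₄ a₆) = 2 * X 1 + C a₁ * X 0 + C a₃ := by
  simp [weierstrassPoly]

theorem pderiv_zero_weierstrassPoly :
    pderiv 0 (weierstrassPoly a₁ a₂ a₃ a₄ a₆) =
      C a₁ * X 1 - 3 * X 0 ^ 2 - 2 * C a₂ * X 0 - C a₄ := by
  simp [weierstrassPoly]
  ring

theorem pderiv_zero_pderiv_one_weierstrassPoly :
    pderiv 0 (pderiv 1 (weierstrassPoly a₁ a₂ a₃ a₄ a₆)) = C a₁ := by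
  rw [pderiv_one_weierstrassPoly, ← map_ofNat C 2]
  simp

end MvPolynomial

/-- Stöhr–Voloch formula for the Cartier operator in characteristic `p = 2`:
for `f = y² + a₁xy + a₃y - x³ - a₂x² - a₄x - a₆` and the invariant vector field `P`
with `P(x) = 2y + a₁x + a₃`, `P(y) = a₁y - 3x² - 2a₂x - a₄`, one has
`∂_x ∂_y (f·h) ≡ (P + a₁)(h) mod (2, f)` for every `h ∈ R[x,y]`.
Here `x = X 0`, `y = X 1`, and `aᵢ` are the variables of `WRing`. -/
theorem cartier_formula_char_two :
    letI a₁ : WRing := X 0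
    letI a₂ : WRing := X 1
    letI a₃ : WRing := X 2
    letI a₄ : WRing := X 3
    letI a₆ : WRing := X 4
    letI x : MvPolynomial (Fin 2) WRing := X 0
    letI y : MvPolynomial (Fin 2) WRing := X 1
    letI f : MvPolynomial (Fin 2) WRing :=
      y ^ 2 + C a₁ * x * y + C a₃ * y - x ^ 3 - C a₂ * x ^ 2 - C a₄ * x - C a₆
    letI P : Derivation WRing (MvPolynomial (Fin 2) WRing) (MvPolynomial (Fin 2) WRing) :=
      MvPolynomial.mkDerivation WRing fun i =>
        if i = 0 then 2 * y + C a₁ * x + C a₃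
        else C a₁ * y - 3 * x ^ 2 - 2 * C a₂ * x - C a₄
    ∀ h : MvPolynomial (Fin 2) WRing,
      pderiv 0 (pderiv 1 (f * h)) - (P h + C a₁ * h) ∈
        Ideal.span {(2 : MvPolynomial (Fin 2) WRing), f} := by
  intro h
  change pderiv 0 (pderiv 1 (weierstrassPoly _ _ _ _ _ * h)) - _ ∈
    Ideal.span {2, weierstrassPoly (X 0) (X 1) (X 2) (X 3) (X 4)}
  rw [pderiv_zero_pderiv_one_mul_sub ?_ ?_ (pderiv_zero_pderiv_one_weierstrassPoly _ _ _ _ _) h]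
  · exact Ideal.mul_mem_right _ _ (Ideal.subset_span (by simp))
  · exact (mkDerivation_X _ _ _).trans (pderiv_one_weierstrassPoly _ _ _ _ _).symm
  · exact (mkDerivation_X _ _ _).trans (pderiv_zero_weierstrassPoly _ _ _ _ _).symm
end
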